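/- arXiv:2207.06357 — 3 statements merged into one kernel-verified Lean document; each statement's English description precedes it below -/
import Mathlib

section
/- If Δ = E‖Ĉ − C‖² > 0 and ‖C − f*‖ > 0, then the function α ↦ E‖(1−α)Ĉ + αf* − C‖² (where Ĉ is an unbiased estimator of C in a Hilbert space) is strictly less than Δ if and only if α ∈ (0, 2Δ/(Δ + ‖C − f*‖²)), and is minimized at α* = Δ/(Δ + ‖C − f*‖²). -/
open MeasureTheory

/-!
Writing `(1 - α) • Ĉ + α • f* - C = (1 - α) • (Ĉ - C) + α • (f* - C)` and using that `Ĉ - C` has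
mean zero, the cross term integrates to zero, so the risk is the quadratic
`(1 - α)² Δ + α² ‖C - f*‖²` in `α`. Everything then follows from elementary facts on this parabola.
-/

section ShrinkageRisk

/-- The risk of the shrinkage estimator `(1 - α) Ĉ + α f*` when `Δ` is the risk of `Ĉ` and
`b = ‖C - f*‖²` is the squared bias of the target `f*`. -/
def shrinkageRisk (Δ b α : ℝ) : ℝ := (1 - α) ^ 2 * Δ + α ^ 2 * b

variable {Δ b : ℝ}

theorem shrinkageRisk_lt_iff (hΔ : 0 ≤ Δ) (hΔb : 0 < Δ + b) (α : ℝ) :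
    shrinkageRisk Δ b α < Δ ↔ α ∈ Set.Ioo 0 (2 * Δ / (Δ + b)) := by
  have hfactor : shrinkageRisk Δ b α - Δ = α * ((Δ + b) * α - 2 * Δ) := by
    unfold shrinkageRisk; ring
  rw [Set.mem_Ioo, lt_div_iff₀ hΔb, ← sub_neg, hfactor, mul_neg_iff]
  constructor
  · rintro (⟨hα, hlt⟩ | ⟨hα, hgt⟩)
    · exact ⟨hα, by linarith⟩
    · nlinarith
  · rintro ⟨hα, hlt⟩
    exact Or.inl ⟨hα, by linarith⟩

theorem isMinOn_shrinkageRisk (hΔb : 0 < Δ + b) :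
    IsMinOn (shrinkageRisk Δ b) Set.univ (Δ / (Δ + b)) := by
  intro α _
  have hmin : shrinkageRisk Δ b (Δ / (Δ + b)) = Δ * b / (Δ + b) := by
    unfold shrinkageRisk; field_simp; ring
  have hsq : shrinkageRisk Δ b α * (Δ + b) = Δ * b + ((Δ + b) * α - Δ) ^ 2 := by
    unfold shrinkageRisk; ring
  rw [Set.mem_ofPred_eq, hmin, div_le_iff₀ hΔb, hsq]
  exact le_add_of_nonneg_right (sq_nonneg _)

end ShrinkageRisk

section BiasVariance

variable {Ω H : Type*} [MeasurableSpace Ω] [NormedAddCommGroup H] [InnerProductSpace ℝ H]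
  [CompleteSpace H] {P : Measure Ω} [IsProbabilityMeasure P]

theorem integral_norm_add_const_sq_of_integral_eq_zero {Y : Ω → H} (hY : Integrable Y P)
    (hY0 : ∫ ω, Y ω ∂P = 0) (hY2 : Integrable (fun ω => ‖Y ω‖ ^ 2) P) (v : H) :
    ∫ ω, ‖Y ω + v‖ ^ 2 ∂P = ∫ ω, ‖Y ω‖ ^ 2 ∂P + ‖v‖ ^ 2 := by
  have hcross : ∫ ω, 2 * inner ℝ (Y ω) v ∂P = 0 := by
    simp_rw [real_inner_comm v]
    rw [integral_const_mul, integral_inner hY, hY0, inner_zero_right, mul_zero]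
  have hcross_int : Integrable (fun ω => 2 * inner ℝ (Y ω) v) P :=
    (hY.inner_const v).const_mul 2
  simp_rw [norm_add_sq_real]
  rw [integral_add (f := fun ω => ‖Y ω‖ ^ 2 + 2 * inner ℝ (Y ω) v) (hY2.add hcross_int)
    (integrable_const _), integral_add hY2 hcross_int, hcross, integral_const]
  simp

theorem integral_norm_shrink_sub_sq {X : Ω → H} {C : H} (hX : Integrable X P)
    (hmean : ∫ ω, X ω ∂P = C) (hX2 : Integrable (fun ω => ‖X ω - C‖ ^ 2) P) (f : H) (α : ℝ) :
    ∫ ω, ‖(1 - α) • X ω + α • f - C‖ ^ 2 ∂P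
      = shrinkageRisk (∫ ω, ‖X ω - C‖ ^ 2 ∂P) (‖C - f‖ ^ 2) α := by
  have hdecomp : ∀ ω, (1 - α) • X ω + α • f - C = (1 - α) • (X ω - C) + α • (f - C) := by
    intro ω; simp only [smul_sub, sub_smul, one_smul]; abel
  have hsq : ∀ ω, ‖(1 - α) • (X ω - C)‖ ^ 2 = (1 - α) ^ 2 * ‖X ω - C‖ ^ 2 := by
    intro ω; rw [norm_smul, mul_pow, Real.norm_eq_abs, sq_abs]
  have hcentered : Integrable (fun ω => X ω - C) P := hX.sub (integrable_const C)
  have hmean_zero : ∫ ω, (1 - α) • (X ω - C) ∂P = 0 := by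
    rw [integral_smul, integral_sub hX (integrable_const C), hmean, integral_const]
    simp
  simp_rw [hdecomp]
  rw [integral_norm_add_const_sq_of_integral_eq_zero (Y := fun ω => (1 - α) • (X ω - C))
    (hcentered.smul (1 - α)) hmean_zero
    (by simpa only [hsq] using hX2.const_mul ((1 - α) ^ 2))]
  simp_rw [hsq]
  rw [integral_const_mul, norm_smul, mul_pow, Real.norm_eq_abs, sq_abs, norm_sub_rev f C]
  rfl

end BiasVariance

theorem risk_lt_iff_and_min_general
    {Ω H : Type*} [MeasurableSpace Ω]
    [NormedAddCommGroup H] [InnerProductSpace ℝ H] [CompleteSpace H]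
    (P : Measure Ω) [IsProbabilityMeasure P]
    (Chat : Ω → H) (C fstar : H)
    (hInt : Integrable Chat P)
    (hUnbiased : ∫ ω, Chat ω ∂P = C)
    (hSq : Integrable (fun ω => ‖Chat ω - C‖ ^ 2) P)
    (hΔpos : 0 < ∫ ω, ‖Chat ω - C‖ ^ 2 ∂P) :
    (∀ α : ℝ,
      (∫ ω, ‖(1 - α) • Chat ω + α • fstar - C‖ ^ 2 ∂P) < ∫ ω, ‖Chat ω - C‖ ^ 2 ∂P ↔
        α ∈ Set.Ioo (0 : ℝ)
          (2 * (∫ ω, ‖Chat ω - C‖ ^ 2 ∂P)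
            / ((∫ ω, ‖Chat ω - C‖ ^ 2 ∂P) + ‖C - fstar‖ ^ 2))) ∧
    (∀ α : ℝ,
      (∫ ω, ‖(1 - ((∫ ω, ‖Chat ω - C‖ ^ 2 ∂P)
          / ((∫ ω, ‖Chat ω - C‖ ^ 2 ∂P) + ‖C - fstar‖ ^ 2))) • Chat ω
          + ((∫ ω, ‖Chat ω - C‖ ^ 2 ∂P)
          / ((∫ ω, ‖Chat ω - C‖ ^ 2 ∂P) + ‖C - fstar‖ ^ 2)) • fstar - C‖ ^ 2 ∂P)
        ≤ ∫ ω, ‖(1 - α) • Chat ω + α • fstar - C‖ ^ 2 ∂P) := by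
  have hrisk := integral_norm_shrink_sub_sq hInt hUnbiased hSq fstar
  have hΔb : 0 < (∫ ω, ‖Chat ω - C‖ ^ 2 ∂P) + ‖C - fstar‖ ^ 2 := by positivity
  refine ⟨fun α => ?_, fun α => ?_⟩
  · rw [hrisk]
    exact shrinkageRisk_lt_iff hΔpos.le hΔb α
  · rw [hrisk, hrisk]
    exact isMinOn_shrinkageRisk hΔb (Set.mem_univ α)

/-- If `Δ = E‖Ĉ − C‖² > 0` and `‖C − f*‖ > 0`, then the risk
`α ↦ E‖(1−α)Ĉ + αf* − C‖²` is strictly less than `Δ` iff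
`α ∈ (0, 2Δ/(Δ + ‖C − f*‖²))`, and it is minimized at
`α* = Δ/(Δ + ‖C − f*‖²)`. -/
theorem risk_lt_iff_and_min
    {Ω H : Type*} [MeasurableSpace Ω]
    [NormedAddCommGroup H] [InnerProductSpace ℝ H] [CompleteSpace H]
    (P : Measure Ω) [IsProbabilityMeasure P]
    (Chat : Ω → H) (C fstar : H)
    (hInt : Integrable Chat P)
    (hUnbiased : ∫ ω, Chat ω ∂P = C)
    (hSq : Integrable (fun ω => ‖Chat ω - C‖ ^ 2) P)
    (hΔpos : 0 < ∫ ω, ‖Chat ω - C‖ ^ 2 ∂P)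
    (hCf : 0 < ‖C - fstar‖) :
    (∀ α : ℝ,
      (∫ ω, ‖(1 - α) • Chat ω + α • fstar - C‖ ^ 2 ∂P) < ∫ ω, ‖Chat ω - C‖ ^ 2 ∂P ↔
        α ∈ Set.Ioo (0 : ℝ)
          (2 * (∫ ω, ‖Chat ω - C‖ ^ 2 ∂P)
            / ((∫ ω, ‖Chat ω - C‖ ^ 2 ∂P) + ‖C - fstar‖ ^ 2))) ∧
    (∀ α : ℝ,
      (∫ ω, ‖(1 - ((∫ ω, ‖Chat ω - C‖ ^ 2 ∂P)
          / ((∫ ω, ‖Chat ω - C‖ ^ 2 ∂P) + ‖C - fstar‖ ^ 2))) • Chat ω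
          + ((∫ ω, ‖Chat ω - C‖ ^ 2 ∂P)
          / ((∫ ω, ‖Chat ω - C‖ ^ 2 ∂P) + ‖C - fstar‖ ^ 2)) • fstar - C‖ ^ 2 ∂P)
        ≤ ∫ ω, ‖(1 - α) • Chat ω + α • fstar - C‖ ^ 2 ∂P) :=
  risk_lt_iff_and_min_general P Chat C fstar hInt hUnbiased hSq hΔpos
end

section
/- Let X₁,…,Xₙ be vectors in ℝ^d, X̄ = (1/n)∑Xᵢ, X̃ᵢ = Xᵢ − X̄, and Σ̂ = (1/n)∑X̃ᵢX̃ᵢᵀ. Then ∑_{i,j=1}^n ⟨Xᵢ − Xⱼ, Xᵢ − Xⱼ⟩² = 2n ∑_{i=1}^n ‖X̃ᵢ‖⁴ + 4n² Tr(Σ̂²) + 2n² (Tr Σ̂)². -/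
/-!
Write `Yᵢ = Xᵢ - X̄` for the centred vectors, so that `Xᵢ - Xⱼ = Yᵢ - Yⱼ` and `∑ Yᵢ = 0`.
Expanding `‖Yᵢ - Yⱼ‖⁴ = (‖Yᵢ‖² - 2⟪Yᵢ, Yⱼ⟫ + ‖Yⱼ‖²)²` and summing over `i, j`, every cross term
containing a single `⟪Yᵢ, Yⱼ⟫` vanishes because `∑ⱼ Yⱼ = 0`. What remains is expressed through
`n Σ̂ = ∑ Yᵢ Yᵢᵀ`: `n Tr Σ̂ = ∑ ‖Yᵢ‖²` and `n² Tr Σ̂² = ∑ᵢⱼ ⟪Yᵢ, Yⱼ⟫²`, the latter from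
`(u uᵀ)(v vᵀ) = ⟪u, v⟫ u vᵀ`.
-/

open Finset

/-- The sample mean of vectors `X₁, …, Xₙ` in `ℝ^d`. -/
noncomputable def sampleMean (n d : ℕ) (X : Fin n → EuclideanSpace ℝ (Fin d)) :
    EuclideanSpace ℝ (Fin d) :=
  (n : ℝ)⁻¹ • ∑ i, X i

/-- The empirical covariance matrix `Σ̂ = (1/n) ∑ᵢ X̃ᵢ X̃ᵢᵀ`. -/
noncomputable def empCov (n d : ℕ) (X : Fin n → EuclideanSpace ℝ (Fin d)) :
    Matrix (Fin d) (Fin d) ℝ :=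
  (n : ℝ)⁻¹ • ∑ i, Matrix.of (fun a b =>
    (X i - sampleMean n d X) a * (X i - sampleMean n d X) b)

open Matrix RealInnerProductSpace

theorem sum_sum_norm_sub_pow_four_of_sum_eq_zero {E ι : Type*} [NormedAddCommGroup E]
    [InnerProductSpace ℝ E] [Fintype ι] (Y : ι → E) (hY : ∑ i, Y i = 0) :
    ∑ i, ∑ j, ‖Y i - Y j‖ ^ 4
      = 2 * Fintype.card ι * ∑ i, ‖Y i‖ ^ 4 + 4 * ∑ i, ∑ j, ⟪Y i, Y j⟫ ^ 2
        + 2 * (∑ i, ‖Y i‖ ^ 2) ^ 2 := by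
  have hrow : ∀ i, ∑ j, ⟪Y i, Y j⟫ = 0 := fun i => by rw [← inner_sum, hY, inner_zero_right]
  have hcross : ∑ i, ∑ j, ‖Y j‖ ^ 2 * ⟪Y i, Y j⟫ = 0 := by
    rw [sum_comm]
    simp only [← mul_sum, ← sum_inner, hY, inner_zero_left, mul_zero, sum_const_zero]
  have hexpand : ∀ i j, ‖Y i - Y j‖ ^ 4
      = ‖Y i‖ ^ 4 + ‖Y j‖ ^ 4 + 4 * ⟪Y i, Y j⟫ ^ 2 + 2 * (‖Y i‖ ^ 2 * ‖Y j‖ ^ 2)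
        - 4 * (‖Y i‖ ^ 2 * ⟪Y i, Y j⟫) - 4 * (‖Y j‖ ^ 2 * ⟪Y i, Y j⟫) := fun i j => by
    rw [show ‖Y i - Y j‖ ^ 4 = (‖Y i - Y j‖ ^ 2) ^ 2 by ring, norm_sub_sq_real]
    ring
  simp only [hexpand, sum_add_distrib, sum_sub_distrib, ← mul_sum, ← sum_mul, hrow, hcross,
    sum_const, card_univ, nsmul_eq_mul, mul_zero]
  ring

section OuterProducts

variable {R ι n : Type*} [CommSemiring R] [Fintype ι] [Fintype n]

theorem trace_sum_vecMulVec_self (v : ι → n → R) :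
    (∑ i, vecMulVec (v i) (v i)).trace = ∑ i, v i ⬝ᵥ v i := by
  simp only [trace_sum, trace_vecMulVec]

theorem trace_sum_vecMulVec_self_mul_self (v : ι → n → R) :
    ((∑ i, vecMulVec (v i) (v i)) * ∑ i, vecMulVec (v i) (v i)).trace
      = ∑ i, ∑ j, (v i ⬝ᵥ v j) ^ 2 := by
  simp only [sum_mul_sum, vecMulVec_mul_vecMulVec, trace_sum, trace_vecMulVec, dotProduct_smul,
    smul_eq_mul, sq]

end OuterProducts

theorem real_inner_eq_dotProduct {ι : Type*} [Fintype ι] (x y : EuclideanSpace ℝ ι) :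
    ⟪x, y⟫ = x ⬝ᵥ y := by
  rw [EuclideanSpace.inner_eq_star_dotProduct]
  simp [dotProduct_comm]

theorem sum_sub_sampleMean (n d : ℕ) (X : Fin n → EuclideanSpace ℝ (Fin d)) :
    ∑ i, (X i - sampleMean n d X) = 0 := by
  obtain rfl | hn := eq_or_ne n 0
  · simp
  rw [sum_sub_distrib, sum_const, card_univ, Fintype.card_fin, sampleMean,
    ← Nat.cast_smul_eq_nsmul ℝ, smul_inv_smul₀ (Nat.cast_ne_zero.mpr hn), sub_self]

theorem empCov_eq_smul_sum_vecMulVec (n d : ℕ) (X : Fin n → EuclideanSpace ℝ (Fin d)) :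
    empCov n d X = (n : ℝ)⁻¹ • ∑ i, vecMulVec (X i - sampleMean n d X) (X i - sampleMean n d X) :=
  rfl

theorem trace_empCov (n d : ℕ) (X : Fin n → EuclideanSpace ℝ (Fin d)) :
    (empCov n d X).trace = (n : ℝ)⁻¹ * ∑ i, ‖X i - sampleMean n d X‖ ^ 2 := by
  simp only [empCov_eq_smul_sum_vecMulVec, trace_smul, trace_sum_vecMulVec_self, smul_eq_mul,
    ← real_inner_eq_dotProduct, real_inner_self_eq_norm_sq]

theorem trace_empCov_mul_self (n d : ℕ) (X : Fin n → EuclideanSpace ℝ (Fin d)) :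
    (empCov n d X * empCov n d X).trace
      = (n : ℝ)⁻¹ ^ 2 * ∑ i, ∑ j, ⟪X i - sampleMean n d X, X j - sampleMean n d X⟫ ^ 2 := by
  rw [empCov_eq_smul_sum_vecMulVec, smul_mul_smul, trace_smul, trace_sum_vecMulVec_self_mul_self]
  simp only [smul_eq_mul, sq, real_inner_eq_dotProduct]

theorem sum_sq_inner_self_general (n d : ℕ) (X : Fin n → EuclideanSpace ℝ (Fin d)) :
    ∑ i, ∑ j, (inner ℝ (X i - X j) (X i - X j) : ℝ) ^ 2
      = 2 * n * ∑ i, ‖X i - sampleMean n d X‖ ^ 4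
        + 4 * (n : ℝ) ^ 2 * (empCov n d X * empCov n d X).trace
        + 2 * (n : ℝ) ^ 2 * (empCov n d X).trace ^ 2 := by
  obtain rfl | hn := eq_or_ne n 0
  · simp
  have hdiff : ∀ i j, X i - X j = (X i - sampleMean n d X) - (X j - sampleMean n d X) :=
    fun i j => (sub_sub_sub_cancel_right _ _ _).symm
  have hcentered := sum_sum_norm_sub_pow_four_of_sum_eq_zero _ (sum_sub_sampleMean n d X)
  simp only [hdiff, real_inner_self_eq_norm_sq, ← pow_mul, hcentered, Fintype.card_fin,
    trace_empCov, trace_empCov_mul_self]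
  field_simp

/-- Lemma B.1 (i):
`∑_{i,j} ⟨Xᵢ − Xⱼ, Xᵢ − Xⱼ⟩² = 2n ∑ᵢ ‖X̃ᵢ‖⁴ + 4n² Tr(Σ̂²) + 2n² (Tr Σ̂)²`. -/
theorem sum_sq_inner_self (n d : ℕ) (hn : 0 < n) (X : Fin n → EuclideanSpace ℝ (Fin d)) :
    ∑ i, ∑ j, (inner ℝ (X i - X j) (X i - X j) : ℝ) ^ 2
      = 2 * n * ∑ i, ‖X i - sampleMean n d X‖ ^ 4
        + 4 * (n : ℝ) ^ 2 * (empCov n d X * empCov n d X).trace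
        + 2 * (n : ℝ) ^ 2 * (empCov n d X).trace ^ 2 :=
  sum_sq_inner_self_general n d X
end

section
/- Let Y, Z be nonnegative random variables with Y + Z > 0 almost surely and E[YZ/(Y+cZ)²] < ∞ for c > 0. If Y and Z are independent, then E[YZ/(Y + cZ)²] = ∫₀^∞ t · E[Y e^{−tY}] · E[Z e^{−ctZ}] dt. -/
/-!
Writing `1 / a ^ 2 = ∫₀^∞ t e^{-at} dt` with `a = Y + cZ` turns `YZ / (Y + cZ)²` into
`∫₀^∞ t (Y e^{-tY}) (Z e^{-ctZ}) dt`. The integrand is nonnegative, so Tonelli's theorem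
lets us take the expectation inside the `dt`-integral, where independence factors it.
The computation runs in `ℝ≥0∞`; both real integrals are read off from lower Lebesgue
integrals at the end.
-/

open MeasureTheory ProbabilityTheory Real Set

lemma integral_Ioi_mul_exp_neg_mul {a : ℝ} (ha : 0 < a) :
    ∫ t in Ioi (0 : ℝ), t * exp (-(a * t)) = 1 / a ^ 2 := by
  have h := integral_rpow_mul_exp_neg_mul_Ioi (a := 2) (r := a) two_pos ha
  norm_num [Gamma_two] at h
  simpa [div_eq_mul_inv, pow_two] using h

lemma integrableOn_Ioi_mul_exp_neg_mul {a : ℝ} (ha : 0 < a) :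
    IntegrableOn (fun t => t * exp (-(a * t))) (Ioi 0) := by
  simpa using integrableOn_rpow_mul_exp_neg_mul_rpow (s := 1) (p := 1) (by norm_num) one_pos ha

lemma lintegral_Ioi_ofReal_mul_exp_neg_mul {a : ℝ} (ha : 0 < a) :
    ∫⁻ t in Ioi 0, ENNReal.ofReal (t * exp (-(a * t))) = ENNReal.ofReal (1 / a ^ 2) := by
  rw [← integral_Ioi_mul_exp_neg_mul ha, ofReal_integral_eq_lintegral_ofReal
    (integrableOn_Ioi_mul_exp_neg_mul ha)]
  exact (ae_restrict_iff' measurableSet_Ioi).2 (.of_forall fun t (ht : 0 < t) => by positivity)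

lemma lintegral_Ioi_ofReal_mul_mul_exp_mul_exp {y z c : ℝ} (hy : 0 ≤ y) (hz : 0 ≤ z)
    (hc : 0 ≤ c) :
    ∫⁻ t in Ioi 0, ENNReal.ofReal (t * (y * exp (-t * y) * (z * exp (-(c * t) * z))))
      = ENNReal.ofReal (y * z / (y + c * z) ^ 2) := by
  have hyz : 0 ≤ y * z := mul_nonneg hy hz
  have hfactor : ∀ t, t * (y * exp (-t * y) * (z * exp (-(c * t) * z)))
      = y * z * (t * exp (-((y + c * z) * t))) := fun t => by
    rw [show -((y + c * z) * t) = -t * y + -(c * t) * z by ring, exp_add]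
    ring
  simp_rw [hfactor, ENNReal.ofReal_mul hyz]
  rw [lintegral_const_mul _ (by fun_prop)]
  -- If `y * z = 0` both sides vanish, also when `y + c * z = 0` (junk value `0 / 0 = 0`).
  rcases hyz.eq_or_lt with hyz0 | hyz_pos
  · simp [← hyz0]
  · have hy_pos : 0 < y := pos_of_mul_pos_left hyz_pos hz
    rw [lintegral_Ioi_ofReal_mul_exp_neg_mul (by positivity), ← ENNReal.ofReal_mul hyz,
      mul_one_div]

lemma mul_exp_neg_mul_le_inv {t : ℝ} (ht : 0 < t) (x : ℝ) : x * exp (-t * x) ≤ t⁻¹ := by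
  have h := (mul_exp_neg_le_exp_neg_one (t * x)).trans (exp_le_one_iff.2 (by norm_num))
  calc x * exp (-t * x) = t⁻¹ * (t * x * exp (-(t * x))) := by
        rw [neg_mul]; field_simp
    _ ≤ t⁻¹ := mul_le_of_le_one_right (inv_nonneg.2 ht.le) h

section Probability

variable {Ω : Type*} [MeasurableSpace Ω] {P : Measure Ω}

lemma integrable_mul_exp_neg_mul [IsFiniteMeasure P] {X : Ω → ℝ} (hX : Measurable X)
    (hX₀ : ∀ ω, 0 ≤ X ω) {t : ℝ} (ht : 0 < t) :
    Integrable (fun ω => X ω * exp (-t * X ω)) P :=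
  .of_bound (by fun_prop) t⁻¹ (.of_forall fun ω => by
    rw [norm_of_nonneg (by have := hX₀ ω; positivity)]
    exact mul_exp_neg_mul_le_inv ht _)

lemma ProbabilityTheory.IndepFun.lintegral_ofReal_mul_eq {X Y : Ω → ℝ}
    (hXY : IndepFun X Y P) (hX : Integrable X P) (hY : Integrable Y P)
    (hX₀ : 0 ≤ᵐ[P] X) (hY₀ : 0 ≤ᵐ[P] Y) :
    ∫⁻ ω, ENNReal.ofReal (X ω * Y ω) ∂P = ENNReal.ofReal ((∫ ω, X ω ∂P) * ∫ ω, Y ω ∂P) := by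
  rw [← hXY.integral_fun_mul_eq_mul_integral hX.aestronglyMeasurable hY.aestronglyMeasurable,
    ofReal_integral_eq_lintegral_ofReal (f := fun ω => X ω * Y ω) (hXY.integrable_mul hX hY)]
  filter_upwards [hX₀, hY₀] with ω hx hy
  exact mul_nonneg hx hy

lemma integral_mul_exp_neg_mul_nonneg {X : Ω → ℝ} (hX₀ : ∀ ω, 0 ≤ X ω) (t : ℝ) :
    0 ≤ ∫ ω, X ω * exp (-t * X ω) ∂P :=
  integral_nonneg fun ω => by have := hX₀ ω; positivity

lemma measurable_integral_mul_exp_neg_mul [SFinite P] {X : Ω → ℝ} (hX : Measurable X) :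
    Measurable fun t => ∫ ω, X ω * exp (-t * X ω) ∂P :=
  (StronglyMeasurable.integral_prod_right'
    (f := fun p : ℝ × Ω => X p.2 * exp (-p.1 * X p.2)) (by fun_prop)).measurable

lemma lintegral_ofReal_mul_mul_exp_mul_exp_of_indepFun [IsFiniteMeasure P] {Y Z : Ω → ℝ}
    (hindep : IndepFun Y Z P) (hYm : Measurable Y) (hZm : Measurable Z)
    (hY₀ : ∀ ω, 0 ≤ Y ω) (hZ₀ : ∀ ω, 0 ≤ Z ω) {t u : ℝ} (ht : 0 < t) (hu : 0 < u) :
    ∫⁻ ω, ENNReal.ofReal (t * (Y ω * exp (-t * Y ω) * (Z ω * exp (-u * Z ω)))) ∂P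
      = ENNReal.ofReal
          (t * (∫ ω, Y ω * exp (-t * Y ω) ∂P) * (∫ ω, Z ω * exp (-u * Z ω) ∂P)) := by
  have hindep' :
      IndepFun (fun ω => Y ω * exp (-t * Y ω)) (fun ω => Z ω * exp (-u * Z ω)) P :=
    hindep.comp (φ := fun y => y * exp (-t * y)) (ψ := fun z => z * exp (-u * z))
      (by fun_prop) (by fun_prop)
  simp_rw [ENNReal.ofReal_mul ht.le]
  rw [lintegral_const_mul _ (by fun_prop), mul_assoc, ENNReal.ofReal_mul ht.le,
    hindep'.lintegral_ofReal_mul_eq (integrable_mul_exp_neg_mul hYm hY₀ ht)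
      (integrable_mul_exp_neg_mul hZm hZ₀ hu)
      (.of_forall fun ω => by have := hY₀ ω; positivity)
      (.of_forall fun ω => by have := hZ₀ ω; positivity)]

end Probability

theorem expectation_ratio_eq_integral_general
    {Ω : Type*} [MeasurableSpace Ω] (P : Measure Ω) [IsProbabilityMeasure P]
    (Y Z : Ω → ℝ) (c : ℝ) (hc : 0 < c)
    (hYm : Measurable Y) (hZm : Measurable Z)
    (hYnn : ∀ ω, 0 ≤ Y ω) (hZnn : ∀ ω, 0 ≤ Z ω)
    (hindep : IndepFun Y Z P) :
    ∫ ω, Y ω * Z ω / (Y ω + c * Z ω) ^ 2 ∂P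
      = ∫ t in Set.Ioi (0 : ℝ),
          t * (∫ ω, Y ω * Real.exp (-t * Y ω) ∂P)
            * (∫ ω, Z ω * Real.exp (-(c * t) * Z ω) ∂P) := by
  have hlhs_meas : Measurable fun ω => Y ω * Z ω / (Y ω + c * Z ω) ^ 2 := by fun_prop
  have hrhs_meas : Measurable fun t => t * (∫ ω, Y ω * exp (-t * Y ω) ∂P)
      * (∫ ω, Z ω * exp (-(c * t) * Z ω) ∂P) :=
    (measurable_id.mul (measurable_integral_mul_exp_neg_mul hYm)).mul
      ((measurable_integral_mul_exp_neg_mul hZm).comp (measurable_const_mul c))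
  rw [integral_eq_lintegral_of_nonneg_ae (.of_forall fun ω => by
      have := hYnn ω; have := hZnn ω; positivity) hlhs_meas.aestronglyMeasurable,
    integral_eq_lintegral_of_nonneg_ae ((ae_restrict_iff' measurableSet_Ioi).2
      (.of_forall fun t (ht : 0 < t) => by
        have := integral_mul_exp_neg_mul_nonneg (P := P) hYnn t
        have := integral_mul_exp_neg_mul_nonneg (P := P) hZnn (c * t)
        positivity)) hrhs_meas.aestronglyMeasurable]
  congr 1
  calc ∫⁻ ω, ENNReal.ofReal (Y ω * Z ω / (Y ω + c * Z ω) ^ 2) ∂P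
      = ∫⁻ ω, (∫⁻ t in Ioi 0,
          ENNReal.ofReal (t * (Y ω * exp (-t * Y ω) * (Z ω * exp (-(c * t) * Z ω))))) ∂P := by
        simp_rw [lintegral_Ioi_ofReal_mul_mul_exp_mul_exp (hYnn _) (hZnn _) hc.le]
    _ = ∫⁻ t in Ioi 0, ∫⁻ ω,
          ENNReal.ofReal (t * (Y ω * exp (-t * Y ω) * (Z ω * exp (-(c * t) * Z ω)))) ∂P :=
        lintegral_lintegral_swap (by fun_prop)
    _ = _ := setLIntegral_congr_fun measurableSet_Ioi fun t (ht : 0 < t) =>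
        lintegral_ofReal_mul_mul_exp_mul_exp_of_indepFun hindep hYm hZm hYnn hZnn ht
          (mul_pos hc ht)

/-- Fubini-type identity: for independent nonnegative random variables `Y, Z` with
`Y + Z > 0` a.s. and integrable `YZ/(Y+cZ)²`,
`E[YZ/(Y + cZ)²] = ∫₀^∞ t E[Y e^{−tY}] E[Z e^{−ctZ}] dt`. -/
theorem expectation_ratio_eq_integral
    {Ω : Type*} [MeasurableSpace Ω] (P : Measure Ω) [IsProbabilityMeasure P]
    (Y Z : Ω → ℝ) (c : ℝ) (hc : 0 < c)
    (hYm : Measurable Y) (hZm : Measurable Z)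
    (hYnn : ∀ ω, 0 ≤ Y ω) (hZnn : ∀ ω, 0 ≤ Z ω)
    (hpos : ∀ᵐ ω ∂P, 0 < Y ω + Z ω)
    (hindep : IndepFun Y Z P)
    (hint : Integrable (fun ω => Y ω * Z ω / (Y ω + c * Z ω) ^ 2) P) :
    ∫ ω, Y ω * Z ω / (Y ω + c * Z ω) ^ 2 ∂P
      = ∫ t in Set.Ioi (0 : ℝ),
          t * (∫ ω, Y ω * Real.exp (-t * Y ω) ∂P)
            * (∫ ω, Z ω * Real.exp (-(c * t) * Z ω) ∂P) :=
  expectation_ratio_eq_integral_general P Y Z c hc hYm hZm hYnn hZnn hindep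
end
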